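/- Suppose θ > 0 and n₀ are such that every smooth word u with |u| > n₀ satisfies |u|₂/|u| > θ. Then there is a constant t₁ such that every smooth word w satisfies ht(w) > (log |w|)/(log(2−θ)) + t₁; equivalently, |w| < t·(2−θ)^(ht(w)−1) for a suitable constant t. -/

import Mathlib

/-- Run lengths of a word: lengths of maximal blocks of equal letters. -/
def runLengths (w : List ℕ) : List ℕ :=
  (w.splitBy (· = ·)).map List.length

/-- The run-length derivative: run lengths, discarding the first and/or last
run if it has length one. -/
def wderiv (w : List ℕ) : List ℕ :=
  let r := runLengths w
  let r1 := if r.head? = some 1 then r.tail else r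
  if r1.getLast? = some 1 then r1.dropLast else r1

/-- `w` is a word over the alphabet {1,2}. -/
def IsWord (w : List ℕ) : Prop := ∀ a ∈ w, a = 1 ∨ a = 2

/-- `w` is differentiable: a word over {1,2} avoiding 111 and 222. -/
def Differentiable' (w : List ℕ) : Prop :=
  IsWord w ∧ ¬ ([1,1,1] <:+: w) ∧ ¬ ([2,2,2] <:+: w)

/-- `w` is smooth (C^∞): arbitrarily often differentiable. -/
def SmoothWord (w : List ℕ) : Prop := ∀ k : ℕ, Differentiable' (wderiv^[k] w)

/-- The height of a smooth word: least `k` with `D^k(w) = ε`. -/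
noncomputable def height (w : List ℕ) : ℕ := sInf {k | wderiv^[k] w = []}

/-- `P^k(ε)`: the set of smooth words of height `k`. -/
def Pk (k : ℕ) : Set (List ℕ) := {w | SmoothWord w ∧ height w = k}

/-- `v` is a primitive of `w`: a smooth word with `D(v) = w`. -/
def Primitive (v w : List ℕ) : Prop := SmoothWord v ∧ wderiv v = w

/-- Simple right extension: `w = uα` for a letter `α ∈ {1,2}`. -/
def SRE (u w : List ℕ) : Prop := ∃ α, (α = 1 ∨ α = 2) ∧ w = u ++ [α]

/-- Maximal right smooth extension (MRSE) chain of height `k`,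
represented as the (nonempty) list of its members. -/
def MRSE (k : ℕ) (c : List (List ℕ)) : Prop :=
  c ≠ [] ∧ (∀ u ∈ c, u ∈ Pk k) ∧ c.Chain' SRE ∧
  (∀ v ∈ Pk k, ∀ u₁, c.head? = some u₁ → ¬ SRE v u₁) ∧
  (∀ v ∈ Pk k, ∀ um, c.getLast? = some um → ¬ SRE um v)

/-- `H^k`: the set of MRSE chains of height `k`. -/
def Hset (k : ℕ) : Set (List (List ℕ)) := {c | MRSE k c}

/-- Letter complement: swaps 1 and 2. -/
def bar (a : ℕ) : ℕ := if a = 1 then 2 else 1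

/-!
The runs of `w` are the letters of `D w` together with at most two discarded runs of length 1,
so `|w| ≤ ΣD(w) + 2 = |D w| + |D w|₂ + 2`. Complements of smooth words are smooth, so the
hypothesis also bounds the frequency of `2` from above by `1 - θ`, and therefore
`|w| ≤ (2 - θ)|D w| + n₀ + 2`. Iterating this along `w, D w, D² w, …, ε` gives
`|w| < a (2 - θ) ^ ht(w)` for a constant `a`, and taking logarithms gives both bounds.
The hypothesis forces `θ < 1` (needed for `2 - θ > 1`) because smooth words are unbounded in
length: the word with run lengths `1 w 1` is a longer smooth primitive of a smooth word `w`.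
-/

theorem List.splitBy_cons_cons_self {α : Type*} [DecidableEq α] (a : α) (l : List α) :
    (a :: a :: l).splitBy (· = ·) = ((a :: l).splitBy (· = ·)).modifyHead (a :: ·) := by
  have hne : (a :: l).splitBy (· = ·) ≠ [] := splitBy_ne_nil.2 (cons_ne_nil a l)
  obtain ⟨g, gs, hsplit⟩ := exists_cons_of_ne_nil hne
  have hchain : ∀ m ∈ g :: gs, m.IsChain fun x y => decide (x = y) := fun m hm =>
    isChain_of_mem_splitBy (hsplit ▸ hm)
  have hg : g ≠ [] := ne_nil_of_mem_splitBy (hsplit ▸ mem_cons_self)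
  have hga : g.head hg = a := by
    simpa [hsplit] using head_head_splitBy (fun x y : α => decide (x = y)) (cons_ne_nil a l)
  have hbound := isChain_getLast_head_splitBy (fun x y : α => decide (x = y)) (a :: l)
  rw [hsplit, isChain_cons] at hbound
  rw [hsplit, modifyHead_cons, splitBy_eq_iff]
  refine ⟨?_, ?_, ?_, ?_⟩
  · simpa [hsplit] using (flatten_splitBy (fun x y : α => decide (x = y)) (a :: l)).symm
  · have h := nil_notMem_splitBy (fun x y : α => decide (x = y)) (a :: l)
    simp only [hsplit, mem_cons, not_or] at h
    simpa using h.2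
  · rintro m (_ | ⟨_, hm⟩)
    · exact isChain_cons.2 ⟨by simp [head?_eq_some_head hg, hga], hchain g mem_cons_self⟩
    · exact hchain m (mem_cons_of_mem g hm)
  · refine isChain_cons.2 ⟨fun y hy => ?_, hbound.2⟩
    obtain ⟨_, hb, h⟩ := hbound.1 y hy
    exact ⟨cons_ne_nil _ _, hb, by rwa [getLast_cons hg]⟩

theorem runLengths_append {u v : List ℕ} (h : ∀ x ∈ u.getLast?, ∀ y ∈ v.head?, x ≠ y) :
    runLengths (u ++ v) = runLengths u ++ runLengths v := by
  rw [runLengths, List.splitBy_append (by simpa using h), List.map_append]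
  rfl

theorem runLengths_replicate_append {n : ℕ} (hn : n ≠ 0) (a : ℕ) {v : List ℕ}
    (hv : ∀ y ∈ v.head?, a ≠ y) :
    runLengths (List.replicate n a ++ v) = n :: runLengths v := by
  rw [runLengths_append (by simpa [List.getLast?_replicate, hn] using hv), runLengths,
    List.splitBy_of_isChain (by simpa using hn)
    (List.isChain_replicate_of_rel n (by simp))]
  simp [runLengths]

theorem runLengths_cons_cons_of_ne {a b : ℕ} (hab : a ≠ b) (l : List ℕ) :
    runLengths (a :: b :: l) = 1 :: runLengths (b :: l) :=
  runLengths_replicate_append one_ne_zero a (v := b :: l) (by simpa using hab)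

theorem runLengths_cons_cons_self (a : ℕ) (l : List ℕ) :
    runLengths (a :: a :: l) = (runLengths (a :: l)).modifyHead (· + 1) := by
  simp only [runLengths, List.splitBy_cons_cons_self]
  cases (a :: l).splitBy (· = ·) <;> simp

theorem sum_runLengths (w : List ℕ) : (runLengths w).sum = w.length := by
  rw [runLengths]
  conv_rhs => rw [← List.flatten_splitBy (fun x y => decide (x = y)) w]
  rw [List.length_flatten]

theorem pos_of_mem_runLengths {w : List ℕ} {r : ℕ} (hr : r ∈ runLengths w) : 0 < r := by
  obtain ⟨g, hg, rfl⟩ := List.mem_map.1 hr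
  exact List.length_pos_iff.2 (List.ne_nil_of_mem_splitBy hg)

theorem runLengths_ne_nil {w : List ℕ} (hw : w ≠ []) : runLengths w ≠ [] := by
  simpa [runLengths] using hw

theorem exists_le_mem_runLengths_cons (a : ℕ) {w : List ℕ} {r : ℕ} (hr : r ∈ runLengths w) :
    ∃ r' ∈ runLengths (a :: w), r ≤ r' := by
  obtain ⟨b, l, rfl⟩ : ∃ b l, w = b :: l :=
    List.exists_cons_of_ne_nil (by rintro rfl; simp [runLengths] at hr)
  by_cases hab : a = b
  · subst hab
    rw [runLengths_cons_cons_self]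
    obtain ⟨c, cs, hc⟩ := List.exists_cons_of_ne_nil (List.ne_nil_of_mem hr)
    rw [hc] at hr ⊢
    rcases List.mem_cons.1 hr with rfl | hr
    · exact ⟨r + 1, by simp, by omega⟩
    · exact ⟨r, by simp [hr], le_rfl⟩
  · exact ⟨r, by simp [runLengths_cons_cons_of_ne hab, hr], le_rfl⟩

theorem exists_three_le_mem_runLengths {x : ℕ} :
    ∀ {w : List ℕ}, [x, x, x] <:+: w → ∃ r ∈ runLengths w, 3 ≤ r
  | [], h => absurd (List.eq_nil_of_infix_nil h) (by simp)
  | a :: w, h => by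
    rcases List.infix_cons_iff.1 h with ⟨t, ht⟩ | h
    · obtain ⟨rfl, rfl⟩ : x = a ∧ x :: x :: t = w := by simpa using ht
      obtain ⟨c, cs, hc⟩ :=
        List.exists_cons_of_ne_nil (runLengths_ne_nil (List.cons_ne_nil x t))
      refine ⟨c + 2, ?_, by have := pos_of_mem_runLengths (hc ▸ List.mem_cons_self); omega⟩
      simp [runLengths_cons_cons_self, hc]
    · obtain ⟨r, hr, h3⟩ := exists_three_le_mem_runLengths h
      obtain ⟨r', hr', hle⟩ := exists_le_mem_runLengths_cons a hr
      exact ⟨r', hr', h3.trans hle⟩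

theorem length_le_sum_wderiv_add_two (w : List ℕ) : w.length ≤ (wderiv w).sum + 2 := by
  rw [← sum_runLengths w]
  simp only [wderiv]
  generalize runLengths w = r
  have hhead : r.sum ≤ (if r.head? = some 1 then r.tail else r).sum + 1 := by
    split_ifs with h
    · obtain ⟨t, rfl⟩ : ∃ t, r = 1 :: t := by cases r <;> simp_all
      simp [add_comm]
    · omega
  generalize (if r.head? = some 1 then r.tail else r) = r at hhead ⊢
  have hlast : r.sum ≤ (if r.getLast? = some 1 then r.dropLast else r).sum + 1 := by
    split_ifs with h
    · obtain ⟨t, rfl⟩ := List.getLast?_eq_some_iff.1 h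
      simp
    · omega
  omega

theorem length_wderiv_lt {w : List ℕ} (hw : w ≠ []) : (wderiv w).length < w.length := by
  have hpos : ∀ r ∈ runLengths w, 0 < r := fun r => pos_of_mem_runLengths
  have hsum := sum_runLengths w
  simp only [wderiv]
  obtain ⟨c, cs, hr⟩ := List.exists_cons_of_ne_nil (runLengths_ne_nil hw)
  rw [hr] at hpos hsum ⊢
  have hcs : cs.length ≤ cs.sum :=
    List.length_le_sum_of_one_le _ fun x hx => hpos x (List.mem_cons_of_mem c hx)
  have hc := hpos c List.mem_cons_self
  have htrim : (if (c :: cs).head? = some 1 then (c :: cs).tail else c :: cs).length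
      < w.length := by
    simp only [List.sum_cons] at hsum
    split_ifs with h <;> simp at h ⊢ <;> omega
  generalize (if (c :: cs).head? = some 1 then (c :: cs).tail else c :: cs) = r at htrim ⊢
  split_ifs <;> simp <;> omega

theorem bar_ne_self (a : ℕ) : bar a ≠ a := by
  unfold bar; split_ifs <;> omega

theorem bar_eq_one_or_two (a : ℕ) : bar a = 1 ∨ bar a = 2 := by
  unfold bar; split_ifs <;> simp

theorem bar_bar {a : ℕ} (ha : a = 1 ∨ a = 2) : bar (bar a) = a := by
  rcases ha with rfl | rfl <;> rfl

theorem bar_eq_bar_iff {a b : ℕ} (ha : a = 1 ∨ a = 2) (hb : b = 1 ∨ b = 2) :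
    bar a = bar b ↔ a = b := by
  rcases ha with rfl | rfl <;> rcases hb with rfl | rfl <;> decide

theorem isWord_map_bar (w : List ℕ) : IsWord (w.map bar) := by
  simpa [IsWord] using fun a _ => bar_eq_one_or_two a

theorem IsWord.map_bar_map_bar {w : List ℕ} (hw : IsWord w) : (w.map bar).map bar = w := by
  rw [List.map_map]
  exact (List.map_congr_left fun a ha => bar_bar (hw a ha)).trans (List.map_id w)

theorem runLengths_map_bar : ∀ {w : List ℕ}, IsWord w → runLengths (w.map bar) = runLengths w
  | [], _ => rfl
  | [_], _ => rfl
  | a :: b :: l, hw => by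
    have ih := runLengths_map_bar (w := b :: l) (fun x hx => hw x (List.mem_cons_of_mem a hx))
    simp only [List.map_cons] at ih ⊢
    by_cases hab : a = b
    · rw [hab, runLengths_cons_cons_self, runLengths_cons_cons_self, ih]
    · have hbar : bar a ≠ bar b := mt (bar_eq_bar_iff (hw a (by simp)) (hw b (by simp))).1 hab
      rw [runLengths_cons_cons_of_ne hab, runLengths_cons_cons_of_ne hbar, ih]

theorem wderiv_map_bar {w : List ℕ} (hw : IsWord w) : wderiv (w.map bar) = wderiv w := by
  simp only [wderiv, runLengths_map_bar hw]

theorem Differentiable'.map_bar {w : List ℕ} (hw : Differentiable' w) :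
    Differentiable' (w.map bar) := by
  obtain ⟨hword, h111, h222⟩ := hw
  refine ⟨isWord_map_bar w, fun h => h222 ?_, fun h => h111 ?_⟩ <;>
    simpa [hword.map_bar_map_bar, bar] using h.map bar

theorem SmoothWord.isWord {w : List ℕ} (hw : SmoothWord w) : IsWord w :=
  (hw 0).1

theorem smoothWord_wderiv {w : List ℕ} (hw : SmoothWord w) : SmoothWord (wderiv w) :=
  fun k => hw (k + 1)

theorem smoothWord_of_wderiv {v : List ℕ} (hv : Differentiable' v)
    (h : SmoothWord (wderiv v)) : SmoothWord v
  | 0 => hv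
  | k + 1 => h k

theorem SmoothWord.map_bar {w : List ℕ} (hw : SmoothWord w) : SmoothWord (w.map bar)
  | 0 => (hw 0).map_bar
  | k + 1 => by
    rw [Function.iterate_succ_apply, wderiv_map_bar hw.isWord]
    exact hw (k + 1)

theorem count_two_map_bar (u : List ℕ) : (u.map bar).count 2 = u.count 1 := by
  induction u with
  | nil => rfl
  | cons a l ih => by_cases h : a = 1 <;> simp [bar, h, ih]

theorem IsWord.count_one_add_count_two {u : List ℕ} (hu : IsWord u) :
    u.count 1 + u.count 2 = u.length := by
  induction u with
  | nil => rfl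
  | cons a l ih =>
    have := ih fun x hx => hu x (List.mem_cons_of_mem a hx)
    rcases hu a List.mem_cons_self with rfl | rfl <;> simp <;> omega

theorem IsWord.sum_eq_length_add_count_two {u : List ℕ} (hu : IsWord u) :
    u.sum = u.length + u.count 2 := by
  induction u with
  | nil => rfl
  | cons a l ih =>
    have := ih fun x hx => hu x (List.mem_cons_of_mem a hx)
    rcases hu a List.mem_cons_self with rfl | rfl <;> simp <;> omega

def fromRunLengths : List ℕ → ℕ → List ℕ
  | [], _ => []
  | n :: l, a => List.replicate n a ++ fromRunLengths l (bar a)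

theorem isWord_fromRunLengths : ∀ (l : List ℕ) {a : ℕ}, a = 1 ∨ a = 2 →
    IsWord (fromRunLengths l a)
  | [], _, _ => by simp [fromRunLengths, IsWord]
  | n :: l, a, ha => by
    have := isWord_fromRunLengths l (bar_eq_one_or_two a)
    intro x hx
    simp only [fromRunLengths, List.mem_append, List.mem_replicate] at hx
    rcases hx with ⟨_, rfl⟩ | hx
    exacts [ha, this x hx]

theorem runLengths_fromRunLengths : ∀ {l : List ℕ}, (∀ n ∈ l, n ≠ 0) → ∀ a : ℕ,
    runLengths (fromRunLengths l a) = l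
  | [], _, _ => rfl
  | n :: l, hl, a => by
    have hhead : ∀ y ∈ (fromRunLengths l (bar a)).head?, a ≠ y := by
      match l, hl with
      | [], _ => simp [fromRunLengths]
      | m :: _, hl =>
        have : m ≠ 0 := hl m (by simp)
        cases m <;> simp_all [fromRunLengths, List.replicate_succ, (bar_ne_self a).symm]
    rw [fromRunLengths, runLengths_replicate_append (hl n List.mem_cons_self) a hhead,
      runLengths_fromRunLengths (fun m hm => hl m (List.mem_cons_of_mem n hm))]

theorem differentiable'_of_runLengths_le_two {v : List ℕ} (hv : IsWord v)
    (h : ∀ r ∈ runLengths v, r ≤ 2) : Differentiable' v := by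
  have htriple : ∀ x, ¬ [x, x, x] <:+: v := fun x hx => by
    obtain ⟨r, hr, h3⟩ := exists_three_le_mem_runLengths hx
    exact absurd (h r hr) (by omega)
  exact ⟨hv, htriple 1, htriple 2⟩

theorem iterate_wderiv_nil (k : ℕ) : wderiv^[k] [] = [] :=
  Function.iterate_fixed rfl k

theorem smoothWord_nil : SmoothWord [] := fun k => by
  rw [iterate_wderiv_nil]
  exact ⟨by simp [IsWord], by simp [List.infix_nil], by simp [List.infix_nil]⟩

theorem SmoothWord.exists_primitive {w : List ℕ} (hw : SmoothWord w) :
    ∃ v, Primitive v w ∧ w.length + 2 ≤ v.length := by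
  -- The two outer runs of length 1 are exactly what `wderiv` discards.
  set l := 1 :: w ++ [1]
  have hl : ∀ n ∈ l, n = 1 ∨ n = 2 := by
    simpa [l, IsWord, or_imp, forall_and] using hw.isWord
  have hrl : runLengths (fromRunLengths l 1) = l :=
    runLengths_fromRunLengths (fun n hn => by rcases hl n hn with rfl | rfl <;> simp) 1
  have hd : wderiv (fromRunLengths l 1) = w := by
    simp only [wderiv, hrl]
    simp [l]
  have hdiff : Differentiable' (fromRunLengths l 1) :=
    differentiable'_of_runLengths_le_two (isWord_fromRunLengths l (Or.inl rfl))
      (fun r hr => by rcases hl r (hrl ▸ hr) with rfl | rfl <;> simp)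
  refine ⟨_, ⟨smoothWord_of_wderiv hdiff (hd ▸ hw), hd⟩, ?_⟩
  rw [← sum_runLengths (fromRunLengths l 1), hrl]
  have := List.length_le_sum_of_one_le l fun n hn => by rcases hl n hn with rfl | rfl <;> simp
  simp [l] at this ⊢
  omega

theorem exists_smoothWord_length_gt (n : ℕ) : ∃ u, SmoothWord u ∧ n < u.length := by
  induction n with
  | zero =>
    obtain ⟨v, ⟨hv, -⟩, hlen⟩ := smoothWord_nil.exists_primitive
    exact ⟨v, hv, by simp at hlen; omega⟩
  | succ n ih =>
    obtain ⟨u, hu, hlen⟩ := ih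
    obtain ⟨v, ⟨hv, -⟩, hvlen⟩ := hu.exists_primitive
    exact ⟨v, hv, by omega⟩

theorem iterate_wderiv_eq_nil_of_length_le : ∀ {n : ℕ} {w : List ℕ}, w.length ≤ n →
    wderiv^[n] w = []
  | 0, w, h => List.eq_nil_of_length_eq_zero (Nat.le_zero.1 h)
  | n + 1, w, h => by
    rcases eq_or_ne w [] with rfl | hw
    · exact iterate_wderiv_nil _
    · rw [Function.iterate_succ_apply]
      exact iterate_wderiv_eq_nil_of_length_le (by have := length_wderiv_lt hw; omega)

theorem iterate_wderiv_height (w : List ℕ) : wderiv^[height w] w = [] :=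
  Nat.sInf_mem (s := {k | wderiv^[k] w = []})
    ⟨w.length, iterate_wderiv_eq_nil_of_length_le le_rfl⟩

theorem height_nil : height [] = 0 :=
  Nat.sInf_eq_zero.2 (Or.inl rfl)

theorem height_eq_height_wderiv_add_one {w : List ℕ} (hw : w ≠ []) :
    height w = height (wderiv w) + 1 := by
  have hpos : 1 ≤ height w := Nat.one_le_iff_ne_zero.2 fun h =>
    hw (by simpa [h] using iterate_wderiv_height w)
  simpa only [height, Function.iterate_succ_apply] using (Nat.sInf_add hpos).symm

def FrequencyBound (θ : ℝ) (n₀ : ℕ) : Prop :=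
  ∀ u : List ℕ, SmoothWord u → n₀ < u.length → θ < (u.count 2 : ℝ) / u.length

namespace FrequencyBound

variable {θ : ℝ} {n₀ : ℕ}

theorem lt_one (H : FrequencyBound θ n₀) : θ < 1 := by
  obtain ⟨u, hu, hlen⟩ := exists_smoothWord_length_gt n₀
  calc θ < (u.count 2 : ℝ) / u.length := H u hu hlen
    _ ≤ 1 := div_le_one_of_le₀ (mod_cast List.count_le_length) (Nat.cast_nonneg _)

theorem count_two_le (H : FrequencyBound θ n₀) (hθ : θ ≤ 1) {u : List ℕ}
    (hu : SmoothWord u) :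
    (u.count 2 : ℝ) ≤ (1 - θ) * u.length + n₀ := by
  have hcount : (u.count 1 : ℝ) + u.count 2 = u.length :=
    mod_cast hu.isWord.count_one_add_count_two
  rcases le_or_gt u.length n₀ with hshort | hlong
  · have : (u.count 2 : ℝ) ≤ n₀ := mod_cast List.count_le_length.trans hshort
    nlinarith [(Nat.cast_nonneg u.length : (0 : ℝ) ≤ _)]
  · have hbar := H _ hu.map_bar (by simpa using hlong)
    rw [count_two_map_bar, List.length_map,
      lt_div_iff₀ (by exact_mod_cast n₀.zero_le.trans_lt hlong)] at hbar
    nlinarith [(Nat.cast_nonneg n₀ : (0 : ℝ) ≤ _)]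

theorem length_le (H : FrequencyBound θ n₀) (hθ : θ ≤ 1) {w : List ℕ} (hw : SmoothWord w) :
    (w.length : ℝ) ≤ (2 - θ) * (wderiv w).length + (n₀ + 2) := by
  have hD := smoothWord_wderiv hw
  have hsum : (w.length : ℝ) ≤ (wderiv w).length + (wderiv w).count 2 + 2 := by
    have := length_le_sum_wderiv_add_two w
    rw [hD.isWord.sum_eq_length_add_count_two] at this
    exact_mod_cast this
  linarith [H.count_two_le hθ hD]

end FrequencyBound

theorem length_add_le_mul_pow_height {c q a : ℝ} (hc : 0 ≤ c) (ha : q + a ≤ a * c)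
    (hstep : ∀ w, SmoothWord w → (w.length : ℝ) ≤ c * (wderiv w).length + q)
    {w : List ℕ} (hw : SmoothWord w) : (w.length : ℝ) + a ≤ a * c ^ height w := by
  induction hk : height w generalizing w with
  | zero =>
    have : w = [] := by simpa [hk] using iterate_wderiv_height w
    simp [this]
  | succ k ih =>
    have hne : w ≠ [] := by rintro rfl; simp [height_nil] at hk
    have hDk : height (wderiv w) = k := by
      have := height_eq_height_wderiv_add_one hne; omega
    have hD := ih (smoothWord_wderiv hw) hDk
    calc (w.length : ℝ) + a ≤ c * (wderiv w).length + q + a := by linarith [hstep w hw]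
      _ ≤ c * ((wderiv w).length + a) := by linarith
      _ ≤ c * (a * c ^ k) := mul_le_mul_of_nonneg_left hD hc
      _ = a * c ^ (k + 1) := by ring

theorem log_div_log_sub_lt_of_lt_mul_pow {n h : ℕ} {a c : ℝ} (ha : 1 < a) (hc : 1 < c)
    (hn : (n : ℝ) < a * c ^ h) : Real.log n / Real.log c - Real.log a / Real.log c < h := by
  have hlc := Real.log_pos hc
  have hla := Real.log_pos ha
  rw [← sub_div, div_lt_iff₀ hlc]
  rcases Nat.eq_zero_or_pos n with rfl | hpos
  · simp only [Nat.cast_zero, Real.log_zero]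
    nlinarith [(Nat.cast_nonneg h : (0 : ℝ) ≤ _)]
  · have := Real.log_lt_log (by exact_mod_cast hpos) hn
    rw [Real.log_mul (by positivity) (by positivity), Real.log_pow] at this
    linarith

theorem lt_mul_mul_pow_pred {x a c : ℝ} {h : ℕ} (ha : 0 ≤ a) (hc : 1 ≤ c)
    (hx : x < a * c ^ h) : x < a * c * c ^ (h - 1) :=
  calc x < a * c ^ h := hx
    _ ≤ a * c ^ (h - 1 + 1) := by gcongr; omega
    _ = a * c * c ^ (h - 1) := by ring

/-- Under a lower letter-frequency bound, `ht(w) > log|w| / log(2−θ) + t₁`;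
equivalently `|w| < t·(2−θ)^(ht(w)−1)` for a suitable constant `t > 0`. -/
theorem stmt14 (θ : ℝ) (n₀ : ℕ) (hθ : 0 < θ)
    (H : ∀ u : List ℕ, SmoothWord u → n₀ < u.length →
      θ < (u.count 2 : ℝ) / u.length) :
    ∃ t₁ t : ℝ, 0 < t ∧ ∀ w : List ℕ, SmoothWord w →
      (Real.log w.length / Real.log (2 - θ) + t₁ < (height w : ℝ)) ∧
      (w.length : ℝ) < t * (2 - θ) ^ (height w - 1) := by
  have hθ1 : θ < 1 := FrequencyBound.lt_one H
  -- `a (1 - θ) = n₀ + 2` is what lets `|w| + a ≤ a (2 - θ) ^ ht w` survive one derivation.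
  set a : ℝ := (n₀ + 2) / (1 - θ)
  have ha : a * (1 - θ) = n₀ + 2 := div_mul_cancel₀ _ (by linarith)
  have ha1 : 1 < a := by
    rw [lt_div_iff₀ (by linarith)]
    linarith [(Nat.cast_nonneg n₀ : (0 : ℝ) ≤ _)]
  have hc : 1 < 2 - θ := by linarith
  have hbound (w : List ℕ) (hw : SmoothWord w) : (w.length : ℝ) < a * (2 - θ) ^ height w := by
    have := length_add_le_mul_pow_height (by linarith) (by linarith)
      (fun v hv => FrequencyBound.length_le H hθ1.le hv) hw
    linarith
  refine ⟨-(Real.log a / Real.log (2 - θ)), a * (2 - θ), by positivity,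
    fun w hw => ⟨?_, ?_⟩⟩
  · rw [← sub_eq_add_neg]
    exact log_div_log_sub_lt_of_lt_mul_pow ha1 hc (hbound w hw)
  · exact lt_mul_mul_pow_pred (by linarith) hc.le (hbound w hw)
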